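/- In the Hamming scheme H(D,q) with base vertex x, suppose a subset Y ⊆ X is such that χ_Y is orthogonal to every irreducible T(x)-module with endpoint between 1 and t. Then for all 0 ≤ k, ℓ ≤ D, the quantity |Y ∩ R_k(x) ∩ R_ℓ(z)| is independent of the choice of z ∈ R_t(x). -/

import Mathlib

open Matrix

noncomputable section

/-- The standard Hermitian dot product on `X → ℂ` (conjugation on the second argument). -/
def dotc {X : Type*} [Fintype X] (u v : X → ℂ) : ℂ := ∑ y, u y * (starRingEnd ℂ) (v y)

/-- The characteristic vector `x̂` of a vertex. -/
def xhat {X : Type*} [DecidableEq X] (x : X) : X → ℂ := Pi.single x 1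

/-- The characteristic vector of a subset. -/
def chiv {X : Type*} [DecidableEq X] (Y : Finset X) : X → ℂ := fun y => if y ∈ Y then 1 else 0


set_option linter.unusedSectionVars false
set_option maxHeartbeats 1000000

section AuxInner

lemma ite_one_zero_mul (p q : Prop) [Decidable p] [Decidable q] :
    (if p then (1 : ℂ) else 0) * (if q then 1 else 0) = if p ∧ q then 1 else 0 := by
  by_cases hp : p <;> by_cases hq : q <;> simp [hp, hq]

variable {n : Type*} [Fintype n] [DecidableEq n]


lemma dotc_add_right (u a b : n → ℂ) : dotc u (a + b) = dotc u a + dotc u b := by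
  simp [dotc, mul_add, Finset.sum_add_distrib]

lemma dotc_sub_right (u a b : n → ℂ) : dotc u (a - b) = dotc u a - dotc u b := by
  simp [dotc, mul_sub, Finset.sum_sub_distrib]

lemma dotc_smul_right (u a : n → ℂ) (c : ℂ) : dotc u (c • a) = (starRingEnd ℂ) c * dotc u a := by
  simp [dotc, Finset.mul_sum]; ring_nf
  exact Finset.sum_congr rfl fun y _ => by ring

lemma dotc_zero_right (u : n → ℂ) : dotc u 0 = 0 := by simp [dotc]

lemma dotc_mulVec_left (F : Matrix n n ℂ) (u v : n → ℂ) :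
    dotc (F.mulVec u) v = dotc u (Fᴴ.mulVec v) := by
  simp only [dotc, mulVec, dotProduct, conjTranspose_apply, map_sum, _root_.map_mul,
    starRingEnd_apply, star_star, Finset.sum_mul, Finset.mul_sum]
  rw [Finset.sum_comm]
  exact Finset.sum_congr rfl fun y _ => Finset.sum_congr rfl fun y' _ => by
    simp [mul_comm, mul_assoc, mul_left_comm]

lemma dotc_self_eq_zero {v : n → ℂ} (h : dotc v v = 0) : v = 0 := by
  have h2 : ∑ y, Complex.normSq (v y) = 0 := by
    have := congrArg Complex.re h
    simpa [dotc, Complex.mul_conj] using this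
  funext y
  have hy := (Finset.sum_eq_zero_iff_of_nonneg (fun i _ => Complex.normSq_nonneg (v i))).mp h2 y
    (Finset.mem_univ y)
  simpa using Complex.normSq_eq_zero.mp hy


/-- identity linear equiv to Euclidean space -/
def toE : (n → ℂ) ≃ₗ[ℂ] EuclideanSpace ℂ n := (WithLp.linearEquiv 2 ℂ (n → ℂ)).symm

lemma inner_toE (u v : n → ℂ) :
    (inner ℂ (toE u) (toE v) : ℂ) = dotc v u := by
  simp [dotc, toE, PiLp.inner_apply, WithLp.linearEquiv, RCLike.inner_apply, mul_comm]

lemma exists_irreducible (T : Subalgebra ℂ (Matrix n n ℂ)) :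
    ∀ (N : ℕ) (W : Submodule ℂ (n → ℂ)), Module.finrank ℂ W ≤ N →
      (∀ F ∈ T, ∀ v ∈ W, F.mulVec v ∈ W) → W ≠ ⊥ →
      ∃ W₁ ≤ W, (∀ F ∈ T, ∀ v ∈ W₁, F.mulVec v ∈ W₁) ∧ W₁ ≠ ⊥ ∧
        (∀ W' ≤ W₁, (∀ F ∈ T, ∀ v ∈ W', F.mulVec v ∈ W') → W' = ⊥ ∨ W' = W₁) := by
  intro N
  induction N with
  | zero =>
    intro W hr _ hbot
    exact absurd (Submodule.finrank_eq_zero.mp (Nat.le_zero.mp hr)) hbot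
  | succ N ih =>
    intro W hr hinv hbot
    by_cases hmin : ∀ W' ≤ W, (∀ F ∈ T, ∀ v ∈ W', F.mulVec v ∈ W') → W' = ⊥ ∨ W' = W
    · exact ⟨W, le_refl _, hinv, hbot, hmin⟩
    · push_neg at hmin
      obtain ⟨W', hle, hinv', hbot', hne⟩ := hmin
      have hlt : Module.finrank ℂ W' < Module.finrank ℂ W :=
        Submodule.finrank_lt_finrank_of_lt (lt_of_le_of_ne hle hne)
      obtain ⟨W₁, h1, h2, h3, h4⟩ := ih W' (by omega) hinv' hbot'
      exact ⟨W₁, h1.trans hle, h2, h3, h4⟩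

lemma key_induction (T : Subalgebra ℂ (Matrix n n ℂ)) (hstar : ∀ F ∈ T, Fᴴ ∈ T)
    (Et : Matrix n n ℂ) (hEt : Et ∈ T) (x : n) (χ : n → ℂ)
    (hgood : ∀ W₁ : Submodule ℂ (n → ℂ),
      (∀ F ∈ T, ∀ v ∈ W₁, F.mulVec v ∈ W₁) → W₁ ≠ ⊥ →
      (∀ W' ≤ W₁, (∀ F ∈ T, ∀ v ∈ W', F.mulVec v ∈ W') → W' = ⊥ ∨ W' = W₁) →
      (∀ v ∈ W₁, v x = 0) →
      (∃ v ∈ W₁, v ≠ 0 ∧ Et.mulVec v = v) →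
      ∀ u ∈ W₁, dotc χ u = 0) :
    ∀ (N : ℕ) (W : Submodule ℂ (n → ℂ)), Module.finrank ℂ W ≤ N →
      (∀ F ∈ T, ∀ v ∈ W, F.mulVec v ∈ W) → (∀ v ∈ W, v x = 0) →
      ∀ w ∈ W, Et.mulVec w = w → ∀ F ∈ T, dotc χ (F.mulVec w) = 0 := by
  intro N
  induction N with
  | zero =>
    intro W hr _ _ w hw _ F _
    have : W = ⊥ := Submodule.finrank_eq_zero.mp (Nat.le_zero.mp hr)
    subst this
    simp only [Submodule.mem_bot] at hw
    subst hw
    simp [dotc, Matrix.mulVec_zero]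
  | succ N ih =>
    intro W hr hinv hx w hw hEtw F hF
    rcases eq_or_ne w 0 with rfl | hw0
    · simp [dotc, Matrix.mulVec_zero]
    have hWbot : W ≠ ⊥ := fun h => hw0 (by simpa [h, Submodule.mem_bot] using hw)
    obtain ⟨W₁, hW₁le, hW₁inv, hW₁bot, hW₁min⟩ :=
      exists_irreducible T (N + 1) W hr hinv hWbot
    -- orthogonal projection set-up
    set W₁' : Submodule ℂ (EuclideanSpace ℂ n) := W₁.map (toE : (n → ℂ) ≃ₗ[ℂ] _).toLinearMap with hW₁'
    set w₁ : n → ℂ := toE.symm (Submodule.orthogonalProjectionOnto W₁' (toE w)) with hw₁def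
    set w₂ : n → ℂ := w - w₁ with hw₂def
    have hw₁mem : w₁ ∈ W₁ := by
      have : (Submodule.orthogonalProjectionOnto W₁' (toE w) : EuclideanSpace ℂ n) ∈ W₁' :=
        (Submodule.orthogonalProjectionOnto W₁' (toE w)).2
      replace this : _ ∈ W₁.map (toE : (n → ℂ) ≃ₗ[ℂ] _).toLinearMap := this
      obtain ⟨u, hu, hequ⟩ := this
      simpa [hw₁def, ← hequ] using hu
    have hw₂orth : ∀ u ∈ W₁, dotc w₂ u = 0 := by
      intro u hu
      have hmem : toE w - (Submodule.orthogonalProjectionOnto W₁' (toE w) : EuclideanSpace ℂ n) ∈ W₁'ᗮ :=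
        W₁'.sub_starProjection_mem_orthogonal (toE w)
      have := hmem (toE u) ⟨u, hu, rfl⟩
      rw [← inner_toE]
      have h2 : toE w₂ = toE w - (Submodule.orthogonalProjectionOnto W₁' (toE w) : EuclideanSpace ℂ n) := by
        simp [hw₂def, hw₁def, map_sub]
      rw [h2]; exact this
    -- orthogonality is preserved by T
    have horthinv : ∀ G ∈ T, ∀ v : n → ℂ, (∀ u ∈ W₁, dotc v u = 0) →
        ∀ u ∈ W₁, dotc (G.mulVec v) u = 0 := by
      intro G hG v hv u hu
      rw [show dotc (G.mulVec v) u = dotc v (Gᴴ.mulVec u) from dotc_mulVec_left G v u]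
      exact hv _ (hW₁inv Gᴴ (hstar G hG) u hu)
    -- Et fixes w₁ and w₂
    have hzero : ∀ d : n → ℂ, d ∈ W₁ → (∀ u ∈ W₁, dotc d u = 0) → d = 0 := by
      intro d hd hdo
      exact dotc_self_eq_zero (hdo d hd)
    have hmv : Et.mulVec w₂ = Et.mulVec w - Et.mulVec w₁ := by
      rw [hw₂def, Matrix.mulVec_sub]
    have hdiff : Et.mulVec w₁ - w₁ = w₂ - Et.mulVec w₂ := by
      rw [hmv, hEtw, hw₂def]; abel
    have hEtw₁ : Et.mulVec w₁ = w₁ := by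
      have hmem : Et.mulVec w₁ - w₁ ∈ W₁ := Submodule.sub_mem _ (hW₁inv Et hEt w₁ hw₁mem) hw₁mem
      have horth' : ∀ u ∈ W₁, dotc (Et.mulVec w₁ - w₁) u = 0 := by
        rw [hdiff]
        intro u hu
        have h1 := hw₂orth u hu
        have h2 := horthinv Et hEt w₂ hw₂orth u hu
        have : dotc (w₂ - Et.mulVec w₂) u = dotc w₂ u - dotc (Et.mulVec w₂) u := by
          simp [dotc, sub_mul, Finset.sum_sub_distrib]
        rw [this, h1, h2, sub_zero]
      exact sub_eq_zero.mp (hzero _ hmem horth')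
    have hEtw₂ : Et.mulVec w₂ = w₂ := by
      have h := hdiff
      rw [hEtw₁, sub_self] at h
      exact (sub_eq_zero.mp h.symm).symm
    -- the complementary module
    set W₂ : Submodule ℂ (n → ℂ) := W ⊓ Submodule.comap (toE : (n → ℂ) ≃ₗ[ℂ] _).toLinearMap W₁'ᗮ
      with hW₂def
    have hW₂mem : ∀ v : n → ℂ, v ∈ W₂ ↔ v ∈ W ∧ ∀ u ∈ W₁, dotc v u = 0 := by
      intro v
      constructor
      · rintro ⟨h1, h2⟩
        refine ⟨h1, fun u hu => ?_⟩
        rw [← inner_toE]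
        exact h2 (toE u) ⟨u, hu, rfl⟩
      · rintro ⟨h1, h2⟩
        refine ⟨h1, ?_⟩
        rintro _ ⟨u, hu, rfl⟩
        show (inner ℂ (toE u) (toE v) : ℂ) = 0
        rw [inner_toE]
        exact h2 u hu
    have hW₂inv : ∀ F ∈ T, ∀ v ∈ W₂, F.mulVec v ∈ W₂ := by
      intro G hG v hv
      rw [hW₂mem] at hv ⊢
      exact ⟨hinv G hG v hv.1, horthinv G hG v hv.2⟩
    have hW₂lt : Module.finrank ℂ W₂ < Module.finrank ℂ W := by
      apply Submodule.finrank_lt_finrank_of_lt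
      rcases lt_or_eq_of_le (inf_le_left : W₂ ≤ W) with h | h
      · exact h
      · exfalso
        apply hW₁bot
        rw [Submodule.eq_bot_iff]
        intro u hu
        have huW₂ : u ∈ W₂ := by rw [hW₂def, h]; exact hW₁le hu
        exact dotc_self_eq_zero (((hW₂mem u).mp huW₂).2 u hu)
    have hw₂memW₂ : w₂ ∈ W₂ := by
      rw [hW₂mem]
      exact ⟨Submodule.sub_mem _ hw (hW₁le hw₁mem), hw₂orth⟩
    have hsplit : dotc χ (F.mulVec w) = dotc χ (F.mulVec w₁) + dotc χ (F.mulVec w₂) := by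
      rw [show w = w₁ + w₂ by rw [hw₂def]; abel, Matrix.mulVec_add, dotc_add_right]
    have hpart₂ : dotc χ (F.mulVec w₂) = 0 :=
      ih W₂ (by omega) hW₂inv (fun v hv => hx v ((hW₂mem v).mp hv).1) w₂ hw₂memW₂ hEtw₂ F hF
    rw [hsplit, hpart₂, add_zero]
    rcases eq_or_ne w₁ 0 with h0 | h0
    · rw [h0, Matrix.mulVec_zero, dotc_zero_right]
    · exact hgood W₁ hW₁inv hW₁bot hW₁min (fun v hv => hx v (hW₁le hv))
        ⟨w₁, hw₁mem, h0, hEtw₁⟩ _ (hW₁inv F hF w₁ hw₁mem)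

end AuxInner

/-- A symmetric association scheme with `D` classes on a finite vertex set `X`,
presented by its associate matrices `A 0 = I, A 1, …, A D` and its primitive
idempotents `E 0 = |X|⁻¹ J, E 1, …, E D`. -/
structure AssocScheme (X : Type*) [Fintype X] [DecidableEq X] (D : ℕ) where
  A : Fin (D + 1) → Matrix X X ℂ
  E : Fin (D + 1) → Matrix X X ℂ
  A_zero : A 0 = 1
  A_symm : ∀ i, (A i).IsSymm
  A_entries : ∀ i x y, A i x y = 0 ∨ A i x y = 1
  A_sum : ∑ i, A i = Matrix.of fun _ _ => (1 : ℂ)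
  A_mul_closed : ∀ i j, ∃ p : Fin (D + 1) → ℂ, A i * A j = ∑ k, p k • A k
  A_comm : ∀ i j, A i * A j = A j * A i
  E_idem : ∀ i j, E i * E j = if i = j then E i else 0
  E_sum : ∑ j, E j = 1
  E_zero : E 0 = (Fintype.card X : ℂ)⁻¹ • Matrix.of fun _ _ => (1 : ℂ)
  E_in_A : ∀ j, ∃ q : Fin (D + 1) → ℂ, E j = ∑ i, q i • A i
  A_in_E : ∀ i, ∃ q : Fin (D + 1) → ℂ, A i = ∑ j, q j • E j

namespace AssocScheme

variable {X : Type*} [Fintype X] [DecidableEq X] {D : ℕ}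

/-- The associate matrices, reindexed by `ℕ` (zero outside `0,…,D`). -/
def AM (S : AssocScheme X D) (i : ℕ) : Matrix X X ℂ :=
  if h : i < D + 1 then S.A ⟨i, h⟩ else 0

/-- The primitive idempotents, reindexed by `ℕ` (zero outside `0,…,D`). -/
def EM (S : AssocScheme X D) (j : ℕ) : Matrix X X ℂ :=
  if h : j < D + 1 then S.E ⟨j, h⟩ else 0

/-- The dual idempotent `E_i^*(x)`: the diagonal matrix with `(y,y)`-entry `(A_i)_{x y}`. -/
def Estar (S : AssocScheme X D) (x : X) (i : ℕ) : Matrix X X ℂ :=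
  Matrix.diagonal fun y => S.AM i x y

/-- The dual associate matrix `A_j^*(x)`: diagonal with `(y,y)`-entry `|X| (E_j)_{x y}`. -/
def Astar (S : AssocScheme X D) (x : X) (j : ℕ) : Matrix X X ℂ :=
  Matrix.diagonal fun y => (Fintype.card X : ℂ) * S.EM j x y

/-- The subspace `E_i^*(x) V`. -/
def EstarSp (S : AssocScheme X D) (x : X) (i : ℕ) : Submodule ℂ (X → ℂ) :=
  LinearMap.range (S.Estar x i).mulVecLin

/-- The subspace `E_j V`. -/
def ESp (S : AssocScheme X D) (j : ℕ) : Submodule ℂ (X → ℂ) :=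
  LinearMap.range (S.EM j).mulVecLin

/-- The scheme is metric (P-polynomial) w.r.t. the ordering `A 0, …, A D`:
`A 1` generates the Bose–Mesner algebra, and left multiplication by `A 1` acts
tridiagonally on the dual decomposition `V = ⊕ᵢ E_i^*(x) V` for each base vertex. -/
def IsMetric (S : AssocScheme X D) : Prop :=
  (∀ i, S.A i ∈ Algebra.adjoin ℂ {S.A 1}) ∧
  ∀ (x : X) (i : ℕ) (v : X → ℂ), v ∈ S.EstarSp x i →
    (S.A 1).mulVec v ∈ S.EstarSp x (i - 1) ⊔ S.EstarSp x i ⊔ S.EstarSp x (i + 1)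

/-- The scheme is cometric (Q-polynomial) w.r.t. the ordering `E 0, …, E D`:
`A_1^*(x)` generates the dual Bose–Mesner algebra and acts tridiagonally on the
decomposition `V = ⊕ⱼ E_j V`, for each base vertex `x`. -/
def IsCometric (S : AssocScheme X D) : Prop :=
  (∀ (x : X) (j : Fin (D + 1)), S.Astar x j ∈ Algebra.adjoin ℂ {S.Astar x 1}) ∧
  ∀ (x : X) (j : ℕ) (v : X → ℂ), v ∈ S.ESp j →
    (S.Astar x 1).mulVec v ∈ S.ESp (j - 1) ⊔ S.ESp j ⊔ S.ESp (j + 1)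

/-- A vector `χ` is a code if `χ ∉ E_0 V` and `χ ∉ E_0^*(z) V` for every vertex `z`. -/
def IsCode (S : AssocScheme X D) (χ : X → ℂ) : Prop :=
  χ ∉ S.ESp 0 ∧ ∀ z : X, χ ∉ S.EstarSp z 0

/-- `δ_x(χ) = min { i ≠ 0 : E_i^*(x) χ ≠ 0 }`. -/
def deltaX (S : AssocScheme X D) (x : X) (χ : X → ℂ) : ℕ :=
  sInf {i : ℕ | i ≠ 0 ∧ (S.Estar x i).mulVec χ ≠ 0}

/-- `s_x(χ) = #{ i ≠ 0 : E_i^*(x) χ ≠ 0 }`. -/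
def sX (S : AssocScheme X D) (x : X) (χ : X → ℂ) : ℕ :=
  {i : ℕ | i ≠ 0 ∧ (S.Estar x i).mulVec χ ≠ 0}.ncard

/-- `δ^*(χ) = min { j ≠ 0 : E_j χ ≠ 0 }` (dual distance). -/
def deltaStar (S : AssocScheme X D) (χ : X → ℂ) : ℕ :=
  sInf {j : ℕ | j ≠ 0 ∧ (S.EM j).mulVec χ ≠ 0}

/-- `s^*(χ) = #{ j ≠ 0 : E_j χ ≠ 0 }` (dual degree). -/
def sStar (S : AssocScheme X D) (χ : X → ℂ) : ℕ :=
  {j : ℕ | j ≠ 0 ∧ (S.EM j).mulVec χ ≠ 0}.ncard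

/-- `δ(χ) = min { i ≠ 0 : ⟨χ, A_i χ⟩ ≠ 0 }` (minimum distance). -/
def deltaMin (S : AssocScheme X D) (χ : X → ℂ) : ℕ :=
  sInf {i : ℕ | i ≠ 0 ∧ dotc χ ((S.AM i).mulVec χ) ≠ 0}

/-- `s(χ) = #{ i ≠ 0 : ⟨χ, A_i χ⟩ ≠ 0 }` (degree). -/
def degree (S : AssocScheme X D) (χ : X → ℂ) : ℕ :=
  {i : ℕ | i ≠ 0 ∧ dotc χ ((S.AM i).mulVec χ) ≠ 0}.ncard

/-- `ψ` is a relative `t`-codesign w.r.t. `x`: `E_i^* ψ ∈ ℂ · A_i x̂` for `1 ≤ i ≤ t`. -/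
def RelCodesign (S : AssocScheme X D) (x : X) (t : ℕ) (ψ : X → ℂ) : Prop :=
  ∀ i : ℕ, 1 ≤ i → i ≤ t → ∃ c : ℂ, (S.Estar x i).mulVec ψ = c • (S.AM i).mulVec (xhat x)

/-- `ψ` is a relative `t`-design w.r.t. `x`: `E_j ψ ∈ ℂ · E_j x̂` for `1 ≤ j ≤ t`. -/
def RelDesign (S : AssocScheme X D) (x : X) (t : ℕ) (ψ : X → ℂ) : Prop :=
  ∀ j : ℕ, 1 ≤ j → j ≤ t → ∃ c : ℂ, (S.EM j).mulVec ψ = c • (S.EM j).mulVec (xhat x)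

/-- The Terwilliger algebra `T(x)`, generated by the Bose–Mesner algebra and the
dual Bose–Mesner algebra with respect to `x`. -/
def Talg (S : AssocScheme X D) (x : X) : Subalgebra ℂ (Matrix X X ℂ) :=
  Algebra.adjoin ℂ (Set.range S.A ∪ Set.range fun i : Fin (D + 1) => S.Estar x (i : ℕ))

/-- A `T(x)`-submodule of the standard module. -/
def IsTSub (S : AssocScheme X D) (x : X) (W : Submodule ℂ (X → ℂ)) : Prop :=
  ∀ F ∈ S.Talg x, ∀ v ∈ W, F.mulVec v ∈ W

/-- An irreducible `T(x)`-module inside the standard module. -/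
def IsIrr (S : AssocScheme X D) (x : X) (W : Submodule ℂ (X → ℂ)) : Prop :=
  S.IsTSub x W ∧ W ≠ ⊥ ∧ ∀ W' ≤ W, S.IsTSub x W' → W' = ⊥ ∨ W' = W

/-- The support `W_s = { i : E_i^*(x) W ≠ 0 }` of a module. -/
def supp (S : AssocScheme X D) (x : X) (W : Submodule ℂ (X → ℂ)) : Set ℕ :=
  {i : ℕ | i ≤ D ∧ Submodule.map (S.Estar x i).mulVecLin W ≠ ⊥}

/-- The dual support `W_s^* = { j : E_j W ≠ 0 }` of a module. -/
def dualSupp (S : AssocScheme X D) (W : Submodule ℂ (X → ℂ)) : Set ℕ :=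
  {j : ℕ | j ≤ D ∧ Submodule.map (S.EM j).mulVecLin W ≠ ⊥}

/-- The endpoint `r(W) = min { i : E_i^*(x) W ≠ 0 }`. -/
def endpoint (S : AssocScheme X D) (x : X) (W : Submodule ℂ (X → ℂ)) : ℕ :=
  sInf (S.supp x W)

/-- The dual endpoint `r^*(W) = min { j : E_j W ≠ 0 }`. -/
def dualEndpoint (S : AssocScheme X D) (W : Submodule ℂ (X → ℂ)) : ℕ :=
  sInf (S.dualSupp W)

/-- The diameter `d(W) = |W_s| - 1`. -/
def diam (S : AssocScheme X D) (x : X) (W : Submodule ℂ (X → ℂ)) : ℕ :=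
  (S.supp x W).ncard - 1

/-- The dual diameter `d^*(W) = |W_s^*| - 1`. -/
def dualDiam (S : AssocScheme X D) (W : Submodule ℂ (X → ℂ)) : ℕ :=
  (S.dualSupp W).ncard - 1

/-- `W` is thin: `dim E_i^*(x) W ≤ 1` for all `i`. -/
def IsThin (S : AssocScheme X D) (x : X) (W : Submodule ℂ (X → ℂ)) : Prop :=
  ∀ i : ℕ, Module.finrank ℂ (Submodule.map (S.Estar x i).mulVecLin W) ≤ 1

/-- `W` is dual thin: `dim E_j W ≤ 1` for all `j`. -/
def IsDualThin (S : AssocScheme X D) (W : Submodule ℂ (X → ℂ)) : Prop :=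
  ∀ j : ℕ, Module.finrank ℂ (Submodule.map (S.EM j).mulVecLin W) ≤ 1

/-- The displacement `η(W) = r(W) + r^*(W) + d(W) - D` (as an integer). -/
def disp (S : AssocScheme X D) (x : X) (W : Submodule ℂ (X → ℂ)) : ℤ :=
  (S.endpoint x W : ℤ) + (S.dualEndpoint W : ℤ) + (S.diam x W : ℤ) - (D : ℤ)

/-- `V_0`: the span of the irreducible `T(x)`-modules of displacement zero. -/
def V0 (S : AssocScheme X D) (x : X) : Submodule ℂ (X → ℂ) :=
  ⨆ (W : Submodule ℂ (X → ℂ)) (_ : S.IsIrr x W ∧ S.disp x W = 0), W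

/-- The split-decomposition subspace `V_{ij} = (Σ_{k ≤ i} E_k^* V) ∩ (Σ_{ℓ ≤ j} E_ℓ V)`. -/
def Vij (S : AssocScheme X D) (x : X) (i j : ℕ) : Submodule ℂ (X → ℂ) :=
  (⨆ k ∈ Finset.range (i + 1), S.EstarSp x k) ⊓ (⨆ l ∈ Finset.range (j + 1), S.ESp l)

/-- The primary module `M x̂`. -/
def primary (S : AssocScheme X D) (x : X) : Submodule ℂ (X → ℂ) :=
  Submodule.span ℂ (Set.range fun i : Fin (D + 1) => (S.A i).mulVec (xhat x))

/-- The graph `(X, R_1)` is bipartite. -/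
def IsBipartiteGraph (S : AssocScheme X D) : Prop :=
  ∃ f : X → Bool, ∀ x y : X, S.A 1 x y ≠ 0 → f x ≠ f y

/-- `Y` is a bipartite half: one colour class of a proper 2-colouring of `(X, R_1)`. -/
def IsBipartiteHalf (S : AssocScheme X D) (Y : Finset X) : Prop :=
  ∃ f : X → Bool, (∀ x y : X, S.A 1 x y ≠ 0 → f x ≠ f y) ∧ (Y : Set X) = {x | f x = true}

/-- The scheme is antipodal: `R_0 ∪ R_D` is an equivalence relation. -/
def IsAntipodal (S : AssocScheme X D) : Prop :=
  ∀ x y z : X, y ≠ z → S.AM D x y ≠ 0 → S.AM D x z ≠ 0 → S.AM D y z ≠ 0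

/-- The scheme is an antipodal double cover: antipodal with fibres of size two. -/
def IsAntipodalDoubleCover (S : AssocScheme X D) : Prop :=
  S.IsAntipodal ∧ ∀ x : X, ∃! y : X, S.AM D x y ≠ 0

/-- The scheme is that of an ordinary cycle: the graph `(X, R_1)` has valency two. -/
def IsOrdinaryCycle (S : AssocScheme X D) : Prop :=
  ∀ x : X, {y : X | S.A 1 x y ≠ 0}.ncard = 2

end AssocScheme

section SchemeLemmas
namespace AssocScheme

variable {X : Type*} [Fintype X] [DecidableEq X] {D : ℕ}

lemma AM_entries (S : AssocScheme X D) (i : ℕ) (a b : X) : S.AM i a b = 0 ∨ S.AM i a b = 1 := by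
  unfold AM
  split
  · exact S.A_entries _ a b
  · left; rfl

lemma A_apply_symm (S : AssocScheme X D) (i : Fin (D + 1)) (a b : X) :
    S.A i a b = S.A i b a := by
  conv_lhs => rw [← S.A_symm i]
  rfl

lemma sum_mulVec' {ι : Type*} (s : Finset ι) (M : ι → Matrix X X ℂ) (v : X → ℂ) :
    (∑ k ∈ s, M k).mulVec v = ∑ k ∈ s, (M k).mulVec v := by
  ext y
  simp only [Matrix.mulVec, dotProduct, Matrix.sum_apply, Finset.sum_mul,
    Finset.sum_apply]
  exact Finset.sum_comm

lemma A_conjT (S : AssocScheme X D) (i : Fin (D + 1)) : (S.A i)ᴴ = S.A i := by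
  ext a b
  rw [Matrix.conjTranspose_apply, ← S.A_apply_symm i]
  rcases S.A_entries i a b with h | h <;> rw [h] <;> simp

lemma Estar_conjT (S : AssocScheme X D) (x : X) (i : ℕ) :
    (S.Estar x i)ᴴ = S.Estar x i := by
  unfold Estar
  ext a b
  rw [Matrix.conjTranspose_apply, Matrix.diagonal_apply, Matrix.diagonal_apply]
  by_cases hab : b = a
  · subst hab
    rcases S.AM_entries i x b with h | h <;> rw [h] <;> simp
  · rw [if_neg hab, if_neg fun h => hab h.symm, star_zero]

lemma A_mem_Talg (S : AssocScheme X D) (x : X) (i : Fin (D + 1)) : S.A i ∈ S.Talg x :=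
  Algebra.subset_adjoin (Or.inl ⟨i, rfl⟩)

lemma AM_mem_Talg (S : AssocScheme X D) (x : X) (i : ℕ) : S.AM i ∈ S.Talg x := by
  unfold AM
  split
  · exact S.A_mem_Talg x _
  · exact zero_mem _

lemma Estar_mem_Talg (S : AssocScheme X D) (x : X) (i : ℕ) : S.Estar x i ∈ S.Talg x := by
  by_cases h : i < D + 1
  · exact Algebra.subset_adjoin (Or.inr ⟨⟨i, h⟩, rfl⟩)
  · have : S.Estar x i = 0 := by
      unfold Estar AM
      rw [dif_neg h]
      simp
    rw [this]
    exact zero_mem _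

lemma star_mem_Talg (S : AssocScheme X D) (x : X) {F : Matrix X X ℂ} (hF : F ∈ S.Talg x) :
    Fᴴ ∈ S.Talg x := by
  induction hF using Algebra.adjoin_induction with
  | mem G hG =>
    rcases hG with ⟨i, rfl⟩ | ⟨i, rfl⟩
    · rw [S.A_conjT i]; exact S.A_mem_Talg x i
    · rw [S.Estar_conjT x i]; exact S.Estar_mem_Talg x i
  | algebraMap r =>
    rw [Algebra.algebraMap_eq_smul_one, Matrix.conjTranspose_smul, Matrix.conjTranspose_one]
    rw [← Algebra.algebraMap_eq_smul_one]
    exact algebraMap_mem _ _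
  | add G H _ _ hG hH => rw [Matrix.conjTranspose_add]; exact add_mem hG hH
  | mul G H _ _ hG hH => rw [Matrix.conjTranspose_mul]; exact mul_mem hH hG

lemma sum_A_apply (S : AssocScheme X D) (a b : X) : ∑ k, S.A k a b = 1 := by
  have := congrArg (fun M : Matrix X X ℂ => M a b) S.A_sum
  simpa [Matrix.sum_apply] using this

lemma A_disjoint (S : AssocScheme X D) {i j : Fin (D + 1)} (hne : i ≠ j) (a b : X) :
    S.A i a b * S.A j a b = 0 := by
  rcases S.A_entries i a b with h1 | h1
  · rw [h1, zero_mul]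
  rcases S.A_entries j a b with h2 | h2
  · rw [h2, mul_zero]
  exfalso
  have hsum : ∑ k, S.A k a b = 1 := S.sum_A_apply a b
  have hre : ∑ k, (S.A k a b).re = 1 := by
    have := congrArg Complex.re hsum
    simpa [Complex.re_sum] using this
  have hnonneg : ∀ k : Fin (D + 1), 0 ≤ (S.A k a b).re := by
    intro k
    rcases S.A_entries k a b with h | h <;> simp [h]
  have hpair : ∑ k ∈ ({i, j} : Finset (Fin (D + 1))), (S.A k a b).re = 2 := by
    rw [Finset.sum_pair hne, h1, h2]
    norm_num
  have hle : ∑ k ∈ ({i, j} : Finset (Fin (D + 1))), (S.A k a b).re ≤ ∑ k, (S.A k a b).re :=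
    Finset.sum_le_sum_of_subset_of_nonneg (Finset.subset_univ _) fun k _ _ => hnonneg k
  rw [hpair, hre] at hle
  linarith

lemma xhat_mem_primary (S : AssocScheme X D) (x : X) : xhat x ∈ S.primary x := by
  have : xhat x = (S.A 0).mulVec (xhat x) := by
    rw [S.A_zero, Matrix.one_mulVec]
  rw [this]
  exact Submodule.subset_span ⟨0, rfl⟩

lemma primary_invariant (S : AssocScheme X D) (x : X) :
    ∀ G ∈ S.Talg x, ∀ p ∈ S.primary x, G.mulVec p ∈ S.primary x := by
  intro G hG
  induction hG using Algebra.adjoin_induction with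
  | mem G hG =>
    intro p hp
    induction hp using Submodule.span_induction with
    | mem v hv =>
      obtain ⟨i, rfl⟩ := hv
      rcases hG with ⟨j, rfl⟩ | ⟨j, rfl⟩
      · -- A j case
        rw [Matrix.mulVec_mulVec]
        obtain ⟨p', hp'⟩ := S.A_mul_closed j i
        rw [hp', sum_mulVec']
        apply Submodule.sum_mem
        intro k _
        rw [Matrix.smul_mulVec]
        exact Submodule.smul_mem _ _ (Submodule.subset_span ⟨k, rfl⟩)
      · -- Estar case
        have key : (S.Estar x ↑j).mulVec ((S.A i).mulVec (xhat x))
            = (if i = j then (1 : ℂ) else 0) • ((S.A i).mulVec (xhat x)) := by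
          funext y
          have hAM : S.AM ↑j x y = S.A j x y := by
            unfold AM
            rw [dif_pos j.isLt]
          have hAi : ((S.A i).mulVec (xhat x)) y = S.A i x y := by
            unfold xhat
            rw [Matrix.mulVec_single]
            show S.A i y x * 1 = S.A i x y
            rw [mul_one]
            exact S.A_apply_symm i y x
          show (S.Estar x ↑j).mulVec _ y = _
          unfold Estar
          rw [Matrix.mulVec_diagonal, hAM, hAi, Pi.smul_apply, hAi, smul_eq_mul]
          by_cases hij : i = j
          · subst hij
            rcases S.A_entries i x y with h | h <;> rw [h] <;> simp
          · rw [if_neg hij, zero_mul, mul_comm]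
            exact S.A_disjoint hij x y
        rw [key]
        exact Submodule.smul_mem _ _ (Submodule.subset_span ⟨i, rfl⟩)
    | zero => rw [Matrix.mulVec_zero]; exact Submodule.zero_mem _
    | add u v _ _ hu hv => rw [Matrix.mulVec_add]; exact Submodule.add_mem _ hu hv
    | smul c u _ hu => rw [Matrix.mulVec_smul]; exact Submodule.smul_mem _ _ hu
  | algebraMap r =>
    intro p hp
    rw [Algebra.algebraMap_eq_smul_one, Matrix.smul_mulVec, Matrix.one_mulVec]
    exact Submodule.smul_mem _ _ hp
  | add G H _ _ hG hH =>
    intro p hp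
    rw [Matrix.add_mulVec]
    exact Submodule.add_mem _ (hG p hp) (hH p hp)
  | mul G H _ _ hG hH =>
    intro p hp
    rw [← Matrix.mulVec_mulVec]
    exact hG _ (hH p hp)

end AssocScheme
end SchemeLemmas

/-- The `i`-th associate matrix of the Hamming scheme `H(D,q)`. -/
def hammingA (D q : ℕ) (i : ℕ) : Matrix (Fin D → Fin q) (Fin D → Fin q) ℂ :=
  Matrix.of fun x y => if hammingDist x y = i then 1 else 0

open AssocScheme in
/-- In the Hamming scheme `H(D,q)` with base vertex `x`, if `χ_Y` is
orthogonal to every irreducible `T(x)`-module with endpoint between `1` and `t`, then for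
all `0 ≤ k, ℓ ≤ D` the quantity `|Y ∩ R_k(x) ∩ R_ℓ(z)|` is independent of the choice of
`z ∈ R_t(x)`. -/
theorem hamming_design_counts
    (D q : ℕ) (hq : 2 ≤ q)
    (S : AssocScheme (Fin D → Fin q) D)
    (hA : ∀ i : Fin (D + 1), S.A i = hammingA D q (i : ℕ))
    (x : Fin D → Fin q) (Y : Finset (Fin D → Fin q)) (t : ℕ) (ht : t ≤ D)
    (horth : ∀ W : Submodule ℂ ((Fin D → Fin q) → ℂ), S.IsIrr x W →
      1 ≤ S.endpoint x W → S.endpoint x W ≤ t → ∀ w ∈ W, dotc (chiv Y) w = 0) :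
    ∀ k l : ℕ, k ≤ D → l ≤ D → ∀ z z' : Fin D → Fin q,
      hammingDist x z = t → hammingDist x z' = t →
      {y ∈ Y | hammingDist x y = k ∧ hammingDist z y = l}.card
        = {y ∈ Y | hammingDist x y = k ∧ hammingDist z' y = l}.card := by
  intro k l hk hl z z' hz hz'
  -- trivial case t = 0
  rcases Nat.eq_zero_or_pos t with ht0 | htpos
  · have hzx : x = z := hammingDist_eq_zero.mp (by rw [hz, ht0])
    have hzx' : x = z' := hammingDist_eq_zero.mp (by rw [hz', ht0])
    rw [← hzx, ← hzx']
  -- the associate matrices are 0/1 distance indicators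
  have hAM : ∀ i : ℕ, i ≤ D → ∀ a b : Fin D → Fin q,
      S.AM i a b = if hammingDist a b = i then 1 else 0 := by
    intro i hi a b
    unfold AssocScheme.AM
    rw [dif_pos (by omega : i < D + 1), hA ⟨i, by omega⟩]
    rfl
  set χ : (Fin D → Fin q) → ℂ := chiv Y with hχdef
  set w : (Fin D → Fin q) → ℂ := xhat z - xhat z' with hwdef
  have hAxhat : ∀ i : Fin (D + 1), ∀ y : Fin D → Fin q,
      ((S.A i).mulVec (xhat x)) y = S.A i x y := by
    intro i y
    unfold xhat
    rw [Matrix.mulVec_single]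
    show S.A i y x * 1 = S.A i x y
    rw [mul_one]
    exact S.A_apply_symm i y x
  -- w is orthogonal to the primary module
  have hworth : ∀ p ∈ S.primary x, dotc w p = 0 := by
    intro p hp
    induction hp using Submodule.span_induction with
    | mem v hv =>
      obtain ⟨i, rfl⟩ := hv
      have hsum : dotc w ((S.A i).mulVec (xhat x))
          = (starRingEnd ℂ) (S.A i x z) - (starRingEnd ℂ) (S.A i x z') := by
        simp only [dotc, hAxhat i, hwdef, Pi.sub_apply, sub_mul, Finset.sum_sub_distrib]
        unfold xhat
        simp [Pi.single_apply]
      rw [hsum, hA i]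
      show (starRingEnd ℂ) (hammingA D q i x z) - (starRingEnd ℂ) (hammingA D q i x z') = 0
      unfold hammingA
      rw [Matrix.of_apply, Matrix.of_apply, hz, hz', sub_self]
    | zero => exact dotc_zero_right w
    | add u v _ _ hu hv => rw [dotc_add_right, hu, hv, add_zero]
    | smul c u _ hu => rw [dotc_smul_right, hu, mul_zero]
  -- the big invariant module on which every element of T kills the x-coordinate
  set WX : Submodule ℂ ((Fin D → Fin q) → ℂ) :=
    { carrier := {v | ∀ F ∈ S.Talg x, (F.mulVec v) x = 0}
      add_mem' := by
        intro a b ha hb F hF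
        rw [Matrix.mulVec_add, Pi.add_apply, ha F hF, hb F hF, add_zero]
      zero_mem' := by
        intro F hF
        rw [Matrix.mulVec_zero]
        rfl
      smul_mem' := by
        intro c v hv F hF
        rw [Matrix.mulVec_smul, Pi.smul_apply, hv F hF, smul_zero] } with hWXdef
  have hWXmem : ∀ v : (Fin D → Fin q) → ℂ, v ∈ WX ↔ ∀ F ∈ S.Talg x, (F.mulVec v) x = 0 :=
    fun v => Iff.rfl
  have hWXinv : ∀ F ∈ S.Talg x, ∀ v ∈ WX, F.mulVec v ∈ WX := by
    intro F hF v hv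
    rw [hWXmem] at hv ⊢
    intro G hG
    rw [Matrix.mulVec_mulVec]
    exact hv _ (mul_mem hG hF)
  have hWXx : ∀ v ∈ WX, v x = 0 := by
    intro v hv
    have := (hWXmem v).mp hv 1 (one_mem _)
    rwa [Matrix.one_mulVec] at this
  have hwWX : w ∈ WX := by
    rw [hWXmem]
    intro F hF
    have h2 : dotc (F.mulVec w) (xhat x) = (F.mulVec w) x := by
      unfold xhat
      simp [dotc, Pi.single_apply]
    rw [← h2, dotc_mulVec_left]
    exact hworth _ (S.primary_invariant x _ (S.star_mem_Talg x hF) _ (S.xhat_mem_primary x))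
  -- E_t^* fixes w
  set Et : Matrix (Fin D → Fin q) (Fin D → Fin q) ℂ := S.Estar x t with hEtdef
  have hwy : ∀ y : Fin D → Fin q, hammingDist x y ≠ t → w y = 0 := by
    intro y hy
    have hyz : y ≠ z := fun h => hy (h ▸ hz)
    have hyz' : y ≠ z' := fun h => hy (h ▸ hz')
    rw [hwdef]
    show xhat z y - xhat z' y = 0
    unfold xhat
    rw [Pi.single_apply, Pi.single_apply, if_neg hyz, if_neg hyz', sub_self]
  have hEtw : Et.mulVec w = w := by
    funext y
    rw [hEtdef]
    show ((S.Estar x t).mulVec w) y = w y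
    unfold AssocScheme.Estar
    rw [Matrix.mulVec_diagonal, hAM t ht]
    by_cases hy : hammingDist x y = t
    · rw [if_pos hy, one_mul]
    · rw [if_neg hy, zero_mul, hwy y hy]
  -- the hypothesis needed for the key induction
  have hgood : ∀ W₁ : Submodule ℂ ((Fin D → Fin q) → ℂ),
      (∀ F ∈ S.Talg x, ∀ v ∈ W₁, F.mulVec v ∈ W₁) → W₁ ≠ ⊥ →
      (∀ W' ≤ W₁, (∀ F ∈ S.Talg x, ∀ v ∈ W', F.mulVec v ∈ W') → W' = ⊥ ∨ W' = W₁) →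
      (∀ v ∈ W₁, v x = 0) →
      (∃ v ∈ W₁, v ≠ 0 ∧ Et.mulVec v = v) →
      ∀ u ∈ W₁, dotc χ u = 0 := by
    rintro W₁ hinv hbot hmin hx0 ⟨v, hvW, hv0, hEtv⟩
    have htsupp : t ∈ S.supp x W₁ := by
      refine ⟨ht, ?_⟩
      intro hcon
      have hvmem : v ∈ Submodule.map (S.Estar x t).mulVecLin W₁ :=
        ⟨v, hvW, by rw [Matrix.mulVecLin_apply]; exact hEtv⟩
      rw [hcon, Submodule.mem_bot] at hvmem
      exact hv0 hvmem
    have h0supp : (0 : ℕ) ∉ S.supp x W₁ := by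
      rintro ⟨-, hne⟩
      apply hne
      rw [Submodule.eq_bot_iff]
      rintro u ⟨v', hv', rfl⟩
      rw [Matrix.mulVecLin_apply]
      funext y
      show ((S.Estar x 0).mulVec v') y = 0
      unfold AssocScheme.Estar
      rw [Matrix.mulVec_diagonal, hAM 0 (Nat.zero_le D)]
      by_cases hxy : hammingDist x y = 0
      · have hyx : x = y := hammingDist_eq_zero.mp hxy
        rw [if_pos hxy, one_mul, ← hyx]
        exact hx0 v' hv'
      · rw [if_neg hxy, zero_mul]
    have hend : S.endpoint x W₁ ∈ S.supp x W₁ := Nat.sInf_mem ⟨t, htsupp⟩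
    have h1le : 1 ≤ S.endpoint x W₁ := by
      rcases Nat.eq_zero_or_pos (S.endpoint x W₁) with h | h
      · exact absurd (h ▸ hend) h0supp
      · exact h
    exact horth W₁ ⟨hinv, hbot, hmin⟩ h1le (Nat.sInf_le htsupp)
  -- apply the key induction
  have hkey := key_induction (S.Talg x) (fun F hF => S.star_mem_Talg x hF) Et
    (S.Estar_mem_Talg x t) x χ hgood (Module.finrank ℂ WX) WX le_rfl hWXinv hWXx w hwWX hEtw
  set F₀ : Matrix (Fin D → Fin q) (Fin D → Fin q) ℂ := S.Estar x k * S.AM l with hF₀def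
  have hF₀mem : F₀ ∈ S.Talg x := mul_mem (S.Estar_mem_Talg x k) (S.AM_mem_Talg x l)
  have hzero := hkey F₀ hF₀mem
  -- the counting identity
  have hcount : ∀ u : Fin D → Fin q, dotc χ (F₀.mulVec (xhat u))
      = (({y ∈ Y | hammingDist x y = k ∧ hammingDist u y = l}).card : ℂ) := by
    intro u
    have hval : ∀ y, (F₀.mulVec (xhat u)) y
        = if hammingDist x y = k ∧ hammingDist u y = l then 1 else 0 := by
      intro y
      rw [hF₀def, ← Matrix.mulVec_mulVec]
      show ((S.Estar x k).mulVec ((S.AM l).mulVec (xhat u))) y = _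
      unfold AssocScheme.Estar
      rw [Matrix.mulVec_diagonal]
      have h2 : ((S.AM l).mulVec (xhat u)) y = S.AM l y u := by
        unfold xhat
        rw [Matrix.mulVec_single]
        show S.AM l y u * 1 = S.AM l y u
        rw [mul_one]
      rw [h2, hAM k hk, hAM l hl, hammingDist_comm y u]
      exact ite_one_zero_mul _ _
    have hsum : dotc χ (F₀.mulVec (xhat u))
        = ∑ y, if y ∈ Y ∧ hammingDist x y = k ∧ hammingDist u y = l then (1 : ℂ) else 0 := by
      unfold dotc
      rw [hχdef]
      apply Finset.sum_congr rfl
      intro y _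
      rw [hval y]
      unfold chiv
      rw [apply_ite (starRingEnd ℂ), _root_.map_one, _root_.map_zero]
      exact ite_one_zero_mul _ _
    rw [hsum, Finset.sum_boole]
    congr 1
    rw [show {y ∈ Y | hammingDist x y = k ∧ hammingDist u y = l}
        = Finset.univ.filter (fun y => y ∈ Y ∧ hammingDist x y = k ∧ hammingDist u y = l) by
      ext y; simp [Finset.mem_filter]]
  -- conclude
  have hfinal : dotc χ (F₀.mulVec w) =
      (({y ∈ Y | hammingDist x y = k ∧ hammingDist z y = l}).card : ℂ)
      - (({y ∈ Y | hammingDist x y = k ∧ hammingDist z' y = l}).card : ℂ) := by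
    rw [hwdef]
    show dotc χ (F₀.mulVec (xhat z - xhat z')) = _
    rw [Matrix.mulVec_sub, dotc_sub_right, hcount z, hcount z']
  rw [hzero] at hfinal
  have := sub_eq_zero.mp hfinal.symm
  exact_mod_cast this
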